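/- For n ≥ 2, the factor complexity of the finite Fibonacci word f_n is given by: for 1 ≤ k ≤ F(n−2), p_k(f_n) = k+1; for F(n−2)+1 ≤ k ≤ F(n−1)−1, p_k(f_n) = F(n−2)+2; and for F(n−1) ≤ k ≤ F(n), p_k(f_n) = F(n)+1−k. -/

import Mathlib

/-- Fibonacci numbers: F(0)=1, F(1)=1, F(n+2)=F(n+1)+F(n). -/
def F : ℕ → ℕ
  | 0 => 1
  | 1 => 1
  | n + 2 => F (n + 1) + F n

/-- Finite Fibonacci words over {a,b} coded as Fin 2 (a=0, b=1). -/
def fibWord : ℕ → List (Fin 2)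
  | 0 => [0]
  | 1 => [1]
  | n + 2 => fibWord (n + 1) ++ fibWord n

/-- Number of distinct length-k factors of a word. -/
noncomputable def pk (w : List (Fin 2)) (k : ℕ) : ℕ :=
  {v : List (Fin 2) | v.length = k ∧ v <:+: w}.ncard

/-!
Write `w = f_{m+2} = f_{m+1} f_m`, `p = F (m+1)`, `q = F m`. The words `f_{m+1} f_m` and
`f_m f_{m+1}` coincide except for their last two letters, which are swapped, so every suffix
of length `k ≤ p - 2` of their common prefix is right special in `w`. Since `w = f_m f_{m-1} f_m`
ends with a copy of `f_m` that also occurs followed by a letter, its suffixes of length `≤ q`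
extend to the right. From `k` to `k + 1` every factor except possibly the suffix of `w` extends,
and right special factors extend twice; so `p_k` grows by one up to `q + 1` and does not
decrease up to `p - 1`. Conversely, away from its last two letters `w` agrees with its shift
by `q`, so for `k > q` every factor starts before `q` or at one of the last two positions:
`p_k ≤ q + 2`. This fixes the first two ranges. Beyond `p - 1`, `p_k` drops by at most one per
step and is at most the number `F (m+2) + 1 - k` of positions, which fixes the last range.
The cases `m ≤ 2` are computed.
-/

section Factors

variable {α : Type*} [DecidableEq α]

def factorsOfLength (w : List α) (k : ℕ) : Finset (List α) :=
  (Finset.range (w.length + 1 - k)).image fun i => (w.drop i).take k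

theorem mem_factorsOfLength {w v : List α} {k : ℕ} :
    v ∈ factorsOfLength w k ↔ v.length = k ∧ v <:+: w := by
  simp only [factorsOfLength, Finset.mem_image, Finset.mem_range]
  constructor
  · rintro ⟨i, hi, rfl⟩
    refine ⟨by simp only [List.length_take, List.length_drop, inf_eq_left]; omega, ?_⟩
    exact ((w.drop i).take_prefix k).isInfix.trans (w.drop_suffix i).isInfix
  · rintro ⟨rfl, s, t, rfl⟩
    exact ⟨s.length, by simp only [List.append_assoc, List.length_append]; omega, by simp⟩

theorem pk_eq_card_factorsOfLength (w : List (Fin 2)) (k : ℕ) :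
    pk w k = (factorsOfLength w k).card := by
  rw [pk, ← Set.ncard_coe_finset]
  congr 1
  ext v
  simp [mem_factorsOfLength]

theorem card_factorsOfLength_le (w : List α) (k : ℕ) :
    (factorsOfLength w k).card ≤ w.length + 1 - k :=
  Finset.card_image_le.trans (Finset.card_range _).le

theorem card_factorsOfLength_zero (w : List α) : (factorsOfLength w 0).card = 1 := by
  refine Finset.card_eq_one.2 ⟨[], Finset.eq_singleton_iff_unique_mem.2 ⟨?_, fun v hv => ?_⟩⟩
  · exact mem_factorsOfLength.2 ⟨rfl, List.nil_infix⟩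
  · exact List.eq_nil_of_length_eq_zero (mem_factorsOfLength.1 hv).1

theorem mem_image_take_factorsOfLength {w v : List α} {k : ℕ} (hv : v ∈ factorsOfLength w k)
    (hext : v <:+ w → ∃ b, v ++ [b] <:+: w) :
    v ∈ (factorsOfLength w (k + 1)).image (List.take k) := by
  obtain ⟨rfl, s, t, hw⟩ := mem_factorsOfLength.1 hv
  obtain ⟨b, hb⟩ : ∃ b, v ++ [b] <:+: w := by
    rcases t with _ | ⟨b, t⟩
    · exact hext ⟨s, by simpa using hw⟩
    · exact ⟨b, s, t, by simpa using hw⟩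
  exact Finset.mem_image.2 ⟨v ++ [b], mem_factorsOfLength.2 ⟨by simp, hb⟩, by simp⟩

theorem factorsOfLength_subset_insert (w : List α) (k : ℕ) :
    factorsOfLength w k ⊆
      insert (w.drop (w.length - k)) ((factorsOfLength w (k + 1)).image (List.take k)) := by
  intro v hv
  by_cases hsuf : v <:+ w
  · rw [List.suffix_iff_eq_drop.1 hsuf, (mem_factorsOfLength.1 hv).1]
    exact Finset.mem_insert_self _ _
  · exact Finset.mem_insert_of_mem (mem_image_take_factorsOfLength hv (absurd · hsuf))

theorem card_factorsOfLength_le_succ_add_one (w : List α) (k : ℕ) :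
    (factorsOfLength w k).card ≤ (factorsOfLength w (k + 1)).card + 1 :=
  (Finset.card_le_card (factorsOfLength_subset_insert w k)).trans
    ((Finset.card_insert_le _ _).trans (Nat.add_le_add_right Finset.card_image_le 1))

def IsRightSpecial (w v : List α) : Prop :=
  ∃ x y, x ≠ y ∧ v ++ [x] <:+: w ∧ v ++ [y] <:+: w

theorem IsRightSpecial.card_image_take_lt {w v : List α} (hv : IsRightSpecial w v) :
    ((factorsOfLength w (v.length + 1)).image (List.take v.length)).card <
      (factorsOfLength w (v.length + 1)).card := by
  obtain ⟨x, y, hxy, hx, hy⟩ := hv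
  refine Finset.card_image_le.lt_of_ne fun h => hxy ?_
  have := Finset.card_image_iff.1 h (mem_factorsOfLength.2 ⟨by simp, hx⟩)
    (mem_factorsOfLength.2 ⟨by simp, hy⟩) (by simp)
  simpa using this

theorem IsRightSpecial.card_factorsOfLength_le {w v : List α} (hv : IsRightSpecial w v) :
    (factorsOfLength w v.length).card ≤ (factorsOfLength w (v.length + 1)).card := by
  have := (Finset.card_le_card (factorsOfLength_subset_insert w v.length)).trans
    (Finset.card_insert_le _ _)
  have := hv.card_image_take_lt
  omega

theorem IsRightSpecial.card_factorsOfLength_lt {w v : List α} (hv : IsRightSpecial w v)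
    (hext : ∀ s, s <:+ w → s.length = v.length → ∃ b, s ++ [b] <:+: w) :
    (factorsOfLength w v.length).card < (factorsOfLength w (v.length + 1)).card := by
  have hsub : factorsOfLength w v.length ⊆
      (factorsOfLength w (v.length + 1)).image (List.take v.length) := fun s hs =>
    mem_image_take_factorsOfLength hs fun hsuf => hext s hsuf (mem_factorsOfLength.1 hs).1
  exact (Finset.card_le_card hsub).trans_lt hv.card_image_take_lt

end Factors

theorem List.IsPrefix.take_drop_eq {α : Type*} {l₁ l₂ : List α} {i k : ℕ} (h : l₁ <+: l₂)
    (hik : i + k ≤ l₁.length) : (l₁.drop i).take k = (l₂.drop i).take k := by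
  obtain ⟨t, rfl⟩ := h
  rw [List.drop_append_of_le_length (by omega),
    List.take_append_of_le_length (by simp only [List.length_drop]; omega)]

theorem add_mul_le_of_forall_add_le {f : ℕ → ℕ} {c : ℤ} {k m : ℕ} (hkm : k ≤ m)
    (h : ∀ j, k ≤ j → j < m → (f j : ℤ) + c ≤ f (j + 1)) : (f k : ℤ) + c * (m - k) ≤ f m := by
  induction m, hkm using Nat.le_induction with
  | base => simp
  | succ m hkm ih =>
    have := h m hkm m.lt_succ_self
    have := ih fun j hkj hjm => h j hkj (hjm.trans m.lt_succ_self)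
    push_cast
    linarith

theorem F_pos (n : ℕ) : 0 < F n := by
  induction n using Nat.strong_induction_on with
  | _ n ih =>
    match n with
    | 0 | 1 => decide
    | n + 2 => exact Nat.add_pos_left (ih (n + 1) (by omega)) _

theorem F_le_F_succ (n : ℕ) : F n ≤ F (n + 1) := by
  cases n with
  | zero => decide
  | succ n => exact Nat.le_add_right _ _

theorem F_add_two_le_F_succ {m : ℕ} (hm : 3 ≤ m) : F m + 2 ≤ F (m + 1) := by
  obtain ⟨j, rfl⟩ := Nat.exists_eq_add_of_le' hm
  have := F_pos (j + 1)
  have := F_pos j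
  show F (j + 3) + 2 ≤ F (j + 3) + (F (j + 1) + F j)
  omega

theorem length_fibWord (n : ℕ) : (fibWord n).length = F n := by
  induction n using Nat.strong_induction_on with
  | _ n ih =>
    match n with
    | 0 | 1 => rfl
    | n + 2 => simp [fibWord, F, ih (n + 1) (by omega), ih n (by omega)]

theorem fibWord_append_swap {m : ℕ} (hm : 1 ≤ m) :
    ∃ z x y, x ≠ y ∧ fibWord (m + 1) ++ fibWord m = z ++ [x, y] ∧
      fibWord m ++ fibWord (m + 1) = z ++ [y, x] := by
  induction m, hm using Nat.le_induction with
  | base => exact ⟨[1], 0, 1, by decide, rfl, rfl⟩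
  | succ m hm ih =>
    obtain ⟨z, x, y, hxy, h₁, h₂⟩ := ih
    refine ⟨fibWord (m + 1) ++ z, y, x, hxy.symm, ?_, ?_⟩
    · rw [fibWord, List.append_assoc, h₂, List.append_assoc]
    · rw [fibWord, h₁, List.append_assoc]

theorem exists_isRightSpecial_fibWord {m k : ℕ} (hm : 1 ≤ m) (hk : k + 2 ≤ F (m + 1)) :
    ∃ v, v.length = k ∧ IsRightSpecial (fibWord (m + 2)) v := by
  obtain ⟨z, x, y, hxy, h₁, h₂⟩ := fibWord_append_swap hm
  have hz : z.length = F (m + 1) + F m - 2 := by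
    have := congrArg List.length h₁
    simp only [List.length_append, length_fibWord, List.length_cons, List.length_nil] at this
    omega
  set v := z.drop (z.length - k)
  have hvz : z = z.take (z.length - k) ++ v := (List.take_append_drop _ _).symm
  have hv : v.length = k := by simp only [List.length_drop, v]; omega
  refine ⟨v, hv, x, y, hxy, ?_, ?_⟩
  · have : v ++ [x, y] <:+ fibWord (m + 2) := by
      rw [show fibWord (m + 2) = z ++ [x, y] from h₁, hvz, List.append_assoc]
      exact List.suffix_append _ _
    exact (by simp : v ++ [x] <+: v ++ [x, y]).isInfix.trans this.isInfix
  · have : v ++ [y, x] <:+ fibWord (m + 1) := by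
      refine List.suffix_of_suffix_length_le ?_ (List.suffix_append (fibWord m) _) ?_
      · rw [h₂, hvz, List.append_assoc]
        exact List.suffix_append _ _
      · simp only [List.length_append, hv, List.length_cons, List.length_nil, length_fibWord]
        omega
    exact (by simp : v ++ [y] <+: v ++ [y, x]).isInfix.trans
      (this.isInfix.trans (List.prefix_append _ (fibWord m)).isInfix)

theorem exists_append_infix_fibWord {m : ℕ} (hm : 1 ≤ m) {s : List (Fin 2)}
    (hs : s <:+ fibWord (m + 2)) (hlen : s.length ≤ F m) :
    ∃ b, s ++ [b] <:+: fibWord (m + 2) := by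
  obtain ⟨j, rfl⟩ := Nat.exists_eq_add_of_le' hm
  obtain ⟨b, t, hbt⟩ := List.exists_cons_of_length_pos (l := fibWord j)
    (by rw [length_fibWord]; exact F_pos j)
  have hsuf : s <:+ fibWord (j + 1) :=
    List.suffix_of_suffix_length_le hs (List.suffix_append _ _) (by rwa [length_fibWord])
  refine ⟨b, (List.suffix_append_self_iff.2 hsuf).isInfix.trans ?_⟩
  have : fibWord (j + 1) ++ [b] <+: fibWord (j + 1 + 2) := by
    rw [fibWord, fibWord, hbt]
    simp
  exact this.isInfix

theorem card_factorsOfLength_fibWord_le {m k : ℕ} (hm : 1 ≤ m) (hk : F m < k) :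
    (factorsOfLength (fibWord (m + 2)) k).card ≤ F m + 2 := by
  obtain ⟨z, x, y, -, h₁, h₂⟩ := fibWord_append_swap hm
  set w := fibWord (m + 2)
  have hw : w = z ++ [x, y] := h₁
  have hN : w.length = F (m + 1) + F m := by simp [w, fibWord, length_fibWord]
  have hz : z.length + 2 = w.length := by simp [hw]
  have hFm : F (m - 1) ≤ F m := by simpa [Nat.sub_add_cancel hm] using F_le_F_succ (m - 1)
  have hFm1 : F (m + 1) = F m + F (m - 1) := by
    obtain ⟨j, rfl⟩ := Nat.exists_eq_add_of_le' hm; rfl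
  have hsub : factorsOfLength w k ⊆
      (Finset.range (F m) ∪ {w.length - k - 1, w.length - k}).image
        fun i => (w.drop i).take k := by
    intro v hv
    obtain ⟨i, hi, rfl⟩ := Finset.mem_image.1 hv
    rw [Finset.mem_range] at hi
    by_cases hiq : i < F m
    · exact Finset.mem_image_of_mem _ (by simp [hiq])
    by_cases hend : w.length - k - 1 ≤ i
    · refine Finset.mem_image_of_mem _ ?_
      simp only [Finset.union_insert, Finset.union_singleton, Finset.mem_insert,
        Finset.mem_range]
      omega
    refine Finset.mem_image.2
      ⟨i - F m, Finset.mem_union_left _ (Finset.mem_range.2 (by omega)), ?_⟩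
    calc (w.drop (i - F m)).take k
        = ((fibWord (m + 1)).drop (i - F m)).take k :=
          ((List.prefix_append _ _).take_drop_eq (by rw [length_fibWord]; omega)).symm
      _ = ((fibWord m ++ fibWord (m + 1)).drop i).take k := by
          rw [List.drop_append, List.drop_eq_nil_of_le (as := fibWord m)
            (by rw [length_fibWord]; omega), length_fibWord, List.nil_append]
      _ = (z.drop i).take k := by
          rw [h₂]
          exact ((List.prefix_append _ _).take_drop_eq (by omega)).symm
      _ = (w.drop i).take k := by
          rw [hw]
          exact (List.prefix_append _ _).take_drop_eq (by omega)
  calc (factorsOfLength w k).card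
      ≤ (Finset.range (F m) ∪ {w.length - k - 1, w.length - k}).card :=
        (Finset.card_le_card hsub).trans Finset.card_image_le
    _ ≤ F m + 2 := (Finset.card_union_le _ _).trans (by simp [Finset.card_le_two])

theorem card_factorsOfLength_fibWord_lt_succ {m k : ℕ} (hm : 1 ≤ m) (hk : k ≤ F m)
    (hkp : k + 2 ≤ F (m + 1)) :
    (factorsOfLength (fibWord (m + 2)) k).card <
      (factorsOfLength (fibWord (m + 2)) (k + 1)).card := by
  obtain ⟨v, rfl, hv⟩ := exists_isRightSpecial_fibWord hm hkp
  exact hv.card_factorsOfLength_lt fun s hs hlen => exists_append_infix_fibWord hm hs (hlen ▸ hk)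

theorem card_factorsOfLength_fibWord_le_succ {m k : ℕ} (hm : 1 ≤ m) (hkp : k + 2 ≤ F (m + 1)) :
    (factorsOfLength (fibWord (m + 2)) k).card ≤
      (factorsOfLength (fibWord (m + 2)) (k + 1)).card := by
  obtain ⟨v, rfl, hv⟩ := exists_isRightSpecial_fibWord hm hkp
  exact hv.card_factorsOfLength_le

theorem card_factorsOfLength_fibWord_of_le_F {m k : ℕ} (hm : 3 ≤ m) (hk : k ≤ F m) :
    (factorsOfLength (fibWord (m + 2)) k).card = k + 1 := by
  have hstep : ∀ j, j ≤ F m → ((factorsOfLength (fibWord (m + 2)) j).card : ℤ) + 1 ≤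
      (factorsOfLength (fibWord (m + 2)) (j + 1)).card := fun j hj => by
    have := card_factorsOfLength_fibWord_lt_succ (by omega) hj
      ((Nat.add_le_add_right hj 2).trans (F_add_two_le_F_succ hm))
    omega
  have hlow := add_mul_le_of_forall_add_le
    (f := fun j => (factorsOfLength (fibWord (m + 2)) j).card) (Nat.zero_le k)
    fun j _ hj => hstep j (by omega)
  have hup := add_mul_le_of_forall_add_le
    (f := fun j => (factorsOfLength (fibWord (m + 2)) j).card) (show k ≤ F m + 1 by omega)
    fun j _ hj => hstep j (by omega)
  have h₀ := card_factorsOfLength_zero (fibWord (m + 2))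
  have hsucc := card_factorsOfLength_fibWord_le (m := m) (k := F m + 1) (by omega) (by omega)
  omega

theorem card_factorsOfLength_fibWord_of_F_lt_of_lt_F {m k : ℕ} (hm : 3 ≤ m) (h₁ : F m < k)
    (h₂ : k < F (m + 1)) : (factorsOfLength (fibWord (m + 2)) k).card = F m + 2 := by
  refine le_antisymm (card_factorsOfLength_fibWord_le (by omega) h₁) ?_
  have hq := card_factorsOfLength_fibWord_of_le_F hm le_rfl
  have hjump := card_factorsOfLength_fibWord_lt_succ (by omega) le_rfl (F_add_two_le_F_succ hm)
  have hflat := add_mul_le_of_forall_add_le (c := 0)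
    (f := fun j => (factorsOfLength (fibWord (m + 2)) j).card) (show F m + 1 ≤ k from h₁)
    fun j _ hj => by
      have := card_factorsOfLength_fibWord_le_succ (m := m) (k := j) (by omega) (by omega)
      omega
  omega

theorem card_factorsOfLength_fibWord_of_F_succ_le {m k : ℕ} (hm : 3 ≤ m)
    (hk : F (m + 1) ≤ k) :
    (factorsOfLength (fibWord (m + 2)) k).card = F (m + 2) + 1 - k := by
  have hF := F_add_two_le_F_succ hm
  have hlast := card_factorsOfLength_fibWord_of_F_lt_of_lt_F hm (k := F (m + 1) - 1)
    (by omega) (by omega)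
  have hdown := add_mul_le_of_forall_add_le (c := -1)
    (f := fun j => (factorsOfLength (fibWord (m + 2)) j).card)
    (show F (m + 1) - 1 ≤ k by omega) fun j _ _ => by
      have := card_factorsOfLength_le_succ_add_one (fibWord (m + 2)) j
      omega
  have hup := card_factorsOfLength_le (fibWord (m + 2)) k
  rw [length_fibWord] at hup
  have hN : F (m + 2) = F (m + 1) + F m := rfl
  omega

/-- factor complexity of the finite Fibonacci word f_n, n ≥ 2. -/
theorem stmt7 (n : ℕ) (hn : 2 ≤ n) :
    (∀ k, 1 ≤ k → k ≤ F (n - 2) → pk (fibWord n) k = k + 1) ∧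
    (∀ k, F (n - 2) + 1 ≤ k → k ≤ F (n - 1) - 1 → pk (fibWord n) k = F (n - 2) + 2) ∧
    (∀ k, F (n - 1) ≤ k → k ≤ F n → pk (fibWord n) k = F n + 1 - k) := by
  simp only [pk_eq_card_factorsOfLength]
  rcases le_or_gt n 4 with hn4 | hn4
  · interval_cases n <;> refine ⟨fun k h₁ h₂ => ?_, fun k h₁ h₂ => ?_, fun k h₁ h₂ => ?_⟩ <;>
      simp only [F, Nat.reduceSub, Nat.reduceAdd] at h₁ h₂ ⊢ <;>
      first | omega | (interval_cases k <;> decide)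
  · obtain ⟨m, rfl⟩ : ∃ m, n = m + 2 := ⟨n - 2, by omega⟩
    simp only [Nat.add_sub_cancel, show m + 2 - 1 = m + 1 by omega]
    exact ⟨fun k _ hk => card_factorsOfLength_fibWord_of_le_F (by omega) hk,
      fun k h₁ h₂ => card_factorsOfLength_fibWord_of_F_lt_of_lt_F (by omega) h₁ (by omega),
      fun k hk _ => card_factorsOfLength_fibWord_of_F_succ_le (by omega) hk⟩
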